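/- Let 𝔷 and Z_* be as in the context with 𝔷([k]) = ζ(-k) for every k ∈ ℕ, and let ζE and Z_EMS be as in the context. Then in ℂ⟦t_1, t_2, t_3⟧: Z_EMS(t_1,t_2,t_3) = Z_*(t_1+t_2+t_3, t_2+t_3, t_3) + Z_*(t_1+t_2+t_3, t_3, t_2+t_3) + Z_*(t_2+t_3, t_1+t_2+t_3, t_3) + Z_*(t_2+t_3, t_3, t_1+t_2+t_3) + Z_*(t_3, t_1+t_2+t_3, t_2+t_3) + Z_*(t_3, t_2+t_3, t_1+t_2+t_3) + Z_*(t_1+t_2+2t_3, t_2+t_3) + Z_*(t_2+t_3, t_1+t_2+2t_3) + Z_*(t_2+2t_3, t_1+t_2+t_3) + Z_*(t_1+t_2+t_3, t_2+2t_3) + Z_*(t_1+2t_2+2t_3, t_3) + Z_*(t_3, t_1+2t_2+2t_3) + Z_*(t_1+2t_2+3t_3). -/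

import Mathlib

/-!
Both sides are formal power series, so it suffices to compare them modulo the ideal of series
of order `> N`, for every `N`; modulo that ideal `Z_*(u₁,…,u_m)` is the finite sum over
`k ∈ {0,…,N}^m`, since `(-u)^k/k!` has order `≥ k` when `u` has no constant term.

Two identities of generating series then give the result.
* As `binom(b, i) (-t)^b/b! = (-t)^i/i! · (-t)^j/j!` for `i + j = b`, the recursion for `ζE`
  says `Z_EMS(t₁,…,t_r) = Z_*(t_r) · Z_EMS(t₁,…,t_{r-2}, t_{r-1} + t_r)`; applied twice,
  `Z_EMS(t₁,t₂,t₃) = Z_*(t₃) Z_*(t₂+t₃) Z_*(t₁+t₂+t₃)`.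
* As `𝔷` is a quasi-shuffle character, so is `Z_*`: `Z_*(u) Z_*(v) = ∑_{α ∈ qs u v} Z_*(α)`.
  Merging two letters `uᵢ, vⱼ` into `uᵢ + vⱼ` is matched by the binomial expansion
  `(-(uᵢ+vⱼ))^n/n! = ∑_{a+b=n} (-uᵢ)^a/a! · (-vⱼ)^b/b!`.
Expanding the triple product by the second identity gives the thirteen terms.
-/

open scoped BigOperators

/-- The quasi-shuffle (harmonic) product of two words. -/
def qs {M : Type*} [AddCommMonoid M] : List M → List M → Multiset (List M)
  | [], w => {w}
  | a :: u, [] => {a :: u}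
  | a :: u, b :: v =>
      (qs u (b :: v)).map (a :: ·) + (qs (a :: u) v).map (b :: ·) +
        (qs u v).map (fun w => (a + b) :: w)
termination_by u v => u.length + v.length
decreasing_by all_goals (simp; try omega)

/-- The generating series `Z_*(u₁,…,u_m)` of `𝔷`, for power series `uⱼ`
with zero constant term; its coefficient at a monomial `d` is the (finite) sum
`∑_k 𝔷([k₁,…,k_m]) · coeff d (∏ⱼ (-uⱼ)^{kⱼ}/kⱼ!)`. -/
noncomputable def Zstar {n : ℕ} (z : List ℕ → ℂ) (u : List (MvPowerSeries (Fin n) ℂ)) :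
    MvPowerSeries (Fin n) ℂ :=
  fun d => ∑ k ∈ Fintype.piFinset (fun _ : Fin u.length => Finset.range ((∑ i, d i) + 1)),
    z (List.ofFn k) *
      MvPowerSeries.coeff d
        (∏ j : Fin u.length, (((k j).factorial : ℂ))⁻¹ • (-(u.get j)) ^ (k j))

/-- The generating series `Z_EMS(t₁,…,t_r) = ∑_k ζE(-k₁,…,-k_r) ∏ᵢ (-tᵢ)^{kᵢ}/kᵢ!`. -/
noncomputable def ZEMS (zE : List ℕ → ℂ) (r : ℕ) : MvPowerSeries (Fin r) ℂ :=
  fun d => zE (List.ofFn fun i : Fin r => d i) *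
    ∏ i : Fin r, ((-1 : ℂ) ^ (d i) * ((d i).factorial : ℂ)⁻¹)

open Finset MvPowerSeries

theorem Finset.sum_range_sum_range_sub_sum_antidiagonal_mem {G : Type*} [AddCommGroup G]
    (S : AddSubgroup G) (N : ℕ) (H : ℕ → ℕ → G) (hH : ∀ a b, N < a + b → H a b ∈ S) :
    ∑ a ∈ range (N + 1), ∑ b ∈ range (N + 1), H a b -
      ∑ n ∈ range (N + 1), ∑ p ∈ antidiagonal n, H p.1 p.2 ∈ S := by
  have diag : ∑ n ∈ range (N + 1), ∑ p ∈ antidiagonal n, H p.1 p.2 =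
      ∑ a ∈ range (N + 1), ∑ b ∈ range (N + 1 - a), H a b := by
    rw [← sum_range_diag_flip]
    exact sum_congr rfl fun n _ => Nat.sum_antidiagonal_eq_sum_range_succ_mk (fun p => H p.1 p.2) n
  rw [diag, ← sum_sub_distrib]
  refine S.sum_mem fun a ha => ?_
  rw [← sum_range_add_sum_Ico _ (Nat.sub_le (N + 1) a), add_sub_cancel_left]
  refine S.sum_mem fun b hb => hH a b ?_
  simp only [mem_range, mem_Ico] at ha hb
  omega

theorem Fin.sum_piFinset_const_succ {α M : Type*} [AddCommMonoid M] {m : ℕ} (s : Finset α)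
    (f : (Fin (m + 1) → α) → M) :
    ∑ k ∈ Fintype.piFinset (fun _ => s), f k =
      ∑ a ∈ s, ∑ k ∈ Fintype.piFinset (fun _ => s), f (Fin.cons a k) := by
  rw [← sum_product']
  refine sum_nbij' (fun k => (k 0, Fin.tail k)) (fun p => Fin.cons p.1 p.2) ?_ ?_ ?_ ?_ ?_ <;>
    simp [Fintype.mem_piFinset, Fin.forall_fin_succ, Fin.tail]

namespace MvPowerSeries

variable {σ R : Type*} [CommSemiring R]

def orderGtIdeal (σ R : Type*) [CommSemiring R] (N : ℕ) : Ideal (MvPowerSeries σ R) where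
  carrier := {f | (N : ℕ∞) < f.order}
  add_mem' hf hg := lt_of_lt_of_le (lt_min hf hg) min_order_le_add
  zero_mem' := by simp
  smul_mem' _ _ hf := lt_of_lt_of_le (lt_of_lt_of_le hf le_add_self) le_order_mul

theorem mem_orderGtIdeal {N : ℕ} {f : MvPowerSeries σ R} :
    f ∈ orderGtIdeal σ R N ↔ ∀ d : σ →₀ ℕ, d.degree ≤ N → coeff d f = 0 := by
  refine ⟨fun hf d hd => coeff_of_lt_order (lt_of_le_of_lt (by exact_mod_cast hd) hf),
    fun h => ?_⟩
  change (N : ℕ∞) < f.order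
  exact lt_of_lt_of_le (by exact_mod_cast N.lt_succ_self)
    (nat_le_order fun d hd => h d (Nat.lt_succ_iff.1 hd))

theorem mem_orderGtIdeal_of_lt_order {N n : ℕ} {f : MvPowerSeries σ R} (hn : N < n)
    (hf : (n : ℕ∞) ≤ f.order) : f ∈ orderGtIdeal σ R N :=
  lt_of_lt_of_le (by exact_mod_cast hn) hf

theorem eq_of_forall_sub_mem_orderGtIdeal {R : Type*} [CommRing R] {f g : MvPowerSeries σ R}
    (h : ∀ N, f - g ∈ orderGtIdeal σ R N) : f = g := by
  rw [← sub_eq_zero]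
  ext d
  exact mem_orderGtIdeal.1 (h d.degree) d le_rfl

end MvPowerSeries

section ExpNegTerm

variable {σ : Type*}

noncomputable def expNegTerm (u : MvPowerSeries σ ℂ) (k : ℕ) : MvPowerSeries σ ℂ :=
  ((k.factorial : ℂ))⁻¹ • (-u) ^ k

theorem le_order_expNegTerm {u : MvPowerSeries σ ℂ} (hu : constantCoeff u = 0) (k : ℕ) :
    (k : ℕ∞) ≤ (expNegTerm u k).order :=
  (le_order_pow_of_constantCoeff_eq_zero k (by simpa using hu)).trans le_order_smul

theorem expNegTerm_mul_mem_orderGtIdeal {u v : MvPowerSeries σ ℂ} (hu : constantCoeff u = 0)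
    (hv : constantCoeff v = 0) {N a b : ℕ} (h : N < a + b) :
    expNegTerm u a * expNegTerm v b ∈ orderGtIdeal σ ℂ N :=
  mem_orderGtIdeal_of_lt_order h <| by
    exact_mod_cast (add_le_add (le_order_expNegTerm hu a) (le_order_expNegTerm hv b)).trans
      le_order_mul

theorem coeff_prod_expNegTerm_eq_zero {ι : Type*} [Fintype ι] {u : ι → MvPowerSeries σ ℂ}
    (hu : ∀ j, constantCoeff (u j) = 0) {k : ι → ℕ} {d : σ →₀ ℕ} {j : ι}
    (h : d.degree < k j) : coeff d (∏ i, expNegTerm (u i) (k i)) = 0 := by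
  refine coeff_of_lt_order (lt_of_lt_of_le (Nat.cast_lt.2 h) ?_)
  calc (k j : ℕ∞) ≤ ∑ i, (k i : ℕ∞) := by
        exact_mod_cast single_le_sum (fun i _ => Nat.zero_le (k i)) (mem_univ j)
    _ ≤ ∑ i, (expNegTerm (u i) (k i)).order := sum_le_sum fun i _ => le_order_expNegTerm (hu i) _
    _ ≤ _ := le_order_prod _ _

theorem choose_mul_inv_factorial (a b : ℕ) :
    ((a + b).choose a : ℂ) * ((a + b).factorial : ℂ)⁻¹ =
      (a.factorial : ℂ)⁻¹ * (b.factorial : ℂ)⁻¹ := by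
  have h : ((a + b).choose a : ℂ) * a.factorial * b.factorial = (a + b).factorial := by
    rw [Nat.choose_symm_add]; exact_mod_cast Nat.add_choose_mul_factorial_mul_factorial a b
  have hC : ((a + b).choose a : ℂ) ≠ 0 := Nat.cast_ne_zero.2 (Nat.choose_pos (by omega)).ne'
  rw [← h, mul_inv, mul_inv, ← mul_assoc, ← mul_assoc, mul_inv_cancel₀ hC, one_mul]

theorem expNegTerm_mul_expNegTerm (u : MvPowerSeries σ ℂ) (a b : ℕ) :
    expNegTerm u a * expNegTerm u b = ((a + b).choose a : ℂ) • expNegTerm u (a + b) := by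
  rw [expNegTerm, expNegTerm, expNegTerm, smul_mul_smul_comm, ← pow_add, smul_smul,
    choose_mul_inv_factorial]

theorem expNegTerm_add (u v : MvPowerSeries σ ℂ) (n : ℕ) :
    expNegTerm (u + v) n = ∑ p ∈ antidiagonal n, expNegTerm u p.1 * expNegTerm v p.2 := by
  rw [expNegTerm, neg_add, (Commute.all _ _).add_pow', smul_sum]
  refine sum_congr rfl fun p hp => ?_
  rw [HasAntidiagonal.mem_antidiagonal] at hp
  subst hp
  rw [expNegTerm, expNegTerm, smul_mul_smul_comm, ← Nat.cast_smul_eq_nsmul ℂ, smul_smul,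
    mul_comm, choose_mul_inv_factorial]

theorem sum_sum_expNegTerm_mul_sub_mem {u v : MvPowerSeries σ ℂ} (hu : constantCoeff u = 0)
    (hv : constantCoeff v = 0) (N : ℕ) (K : ℕ → MvPowerSeries σ ℂ) :
    ∑ a ∈ range (N + 1), ∑ b ∈ range (N + 1), expNegTerm u a * expNegTerm v b * K (a + b) -
      ∑ n ∈ range (N + 1), expNegTerm (u + v) n * K n ∈ orderGtIdeal σ ℂ N := by
  have split (n : ℕ) : expNegTerm (u + v) n * K n =
      ∑ p ∈ antidiagonal n, expNegTerm u p.1 * expNegTerm v p.2 * K (p.1 + p.2) := by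
    rw [expNegTerm_add, sum_mul]
    exact sum_congr rfl fun p hp => by rw [HasAntidiagonal.mem_antidiagonal.1 hp]
  simp_rw [split]
  exact sum_range_sum_range_sub_sum_antidiagonal_mem (orderGtIdeal σ ℂ N).toAddSubgroup N _
    fun a b h => Ideal.mul_mem_right _ _ (expNegTerm_mul_mem_orderGtIdeal hu hv h)

theorem expNegTerm_X (i : σ) (k : ℕ) :
    expNegTerm (X i : MvPowerSeries σ ℂ) k =
      monomial (Finsupp.single i k) ((-1) ^ k * ((k.factorial : ℂ))⁻¹) := by
  rw [expNegTerm, X, ← map_neg, monomial_pow, Finsupp.smul_single, smul_eq_mul, mul_one,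
    ← LinearMap.map_smul, smul_eq_mul, mul_comm]

theorem prod_expNegTerm_X [Fintype σ] (k : σ → ℕ) :
    ∏ i, expNegTerm (X i : MvPowerSeries σ ℂ) (k i) =
      monomial (Finsupp.equivFunOnFinite.symm k) (∏ i, (-1) ^ k i * ((k i).factorial : ℂ)⁻¹) := by
  simp_rw [expNegTerm_X]
  rw [prod_monomial, Finsupp.equivFunOnFinite_symm_eq_sum]

end ExpNegTerm

section Qs

variable {M : Type*} [AddCommMonoid M]

@[simp] theorem qs_nil_left (w : List M) : qs [] w = {w} := by rw [qs]

@[simp] theorem qs_nil_right (w : List M) : qs w [] = {w} := by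
  cases w <;> rw [qs]

theorem qs_cons_cons (a b : M) (u v : List M) :
    qs (a :: u) (b :: v) = (qs u (b :: v)).map (a :: ·) + (qs (a :: u) v).map (b :: ·) +
      (qs u v).map ((a + b) :: ·) := by
  rw [qs]

theorem mem_of_mem_qs {S : AddSubmonoid M} {u v : List M} (hu : ∀ x ∈ u, x ∈ S)
    (hv : ∀ x ∈ v, x ∈ S) {α : List M} (hα : α ∈ qs u v) : ∀ x ∈ α, x ∈ S := by
  induction u generalizing v α with
  | nil => simp_all
  | cons a u ihu =>
    induction v generalizing α with
    | nil => simp_all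
    | cons b v ihv =>
      simp only [List.mem_cons, forall_eq_or_imp] at hu hv
      rw [qs_cons_cons] at hα
      simp only [Multiset.mem_add, Multiset.mem_map] at hα
      rcases hα with (⟨β, hβ, rfl⟩ | ⟨β, hβ, rfl⟩) | ⟨β, hβ, rfl⟩ <;>
        simp only [List.mem_cons, forall_eq_or_imp]
      · exact ⟨hu.1, ihu hu.2 (by simpa using hv) hβ⟩
      · exact ⟨hv.1, ihv hv.2 hβ⟩
      · exact ⟨S.add_mem hu.1 hv.1, ihu hu.2 hv.2 hβ⟩

end Qs

section ZstarTrunc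

variable {σ : Type*} (N : ℕ)

/-- `ZstarTrunc N [u₁,…,u_m] F = ∑_{k ∈ {0,…,N}^m} (∏ⱼ (-uⱼ)^{kⱼ}/kⱼ!) · F [k₁,…,k_m]`,
see `ZstarTrunc_ofFn`. -/
noncomputable def ZstarTrunc : List (MvPowerSeries σ ℂ) →
    (List ℕ → MvPowerSeries σ ℂ) →ₗ[MvPowerSeries σ ℂ] MvPowerSeries σ ℂ
  | [] => LinearMap.proj []
  | u :: us => ∑ a ∈ range (N + 1),
      expNegTerm u a • (ZstarTrunc us).comp (LinearMap.funLeft _ _ (List.cons a))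

@[simp] theorem ZstarTrunc_nil (F : List ℕ → MvPowerSeries σ ℂ) : ZstarTrunc N [] F = F [] := rfl

@[simp] theorem ZstarTrunc_cons (u : MvPowerSeries σ ℂ) (us : List (MvPowerSeries σ ℂ))
    (F : List ℕ → MvPowerSeries σ ℂ) :
    ZstarTrunc N (u :: us) F =
      ∑ a ∈ range (N + 1), expNegTerm u a * ZstarTrunc N us (fun w => F (a :: w)) := by
  simp [ZstarTrunc, LinearMap.funLeft, Function.comp_def]

theorem ZstarTrunc_append (us vs : List (MvPowerSeries σ ℂ)) (F : List ℕ → MvPowerSeries σ ℂ) :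
    ZstarTrunc N (us ++ vs) F =
      ZstarTrunc N us (fun w => ZstarTrunc N vs (fun w' => F (w ++ w'))) := by
  induction us generalizing F with
  | nil => rfl
  | cons u us ih => simp only [List.cons_append, ZstarTrunc_cons, ih]

theorem ZstarTrunc_add (us : List (MvPowerSeries σ ℂ)) (F G : List ℕ → MvPowerSeries σ ℂ) :
    ZstarTrunc N us (fun w => F w + G w) = ZstarTrunc N us F + ZstarTrunc N us G :=
  map_add (ZstarTrunc N us) F G

theorem ZstarTrunc_mul_left (us : List (MvPowerSeries σ ℂ)) (c : MvPowerSeries σ ℂ)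
    (F : List ℕ → MvPowerSeries σ ℂ) :
    c * ZstarTrunc N us F = ZstarTrunc N us (fun w => c * F w) :=
  ((ZstarTrunc N us).map_smul c F).symm

theorem ZstarTrunc_sum_mul {ι : Type*} (us : List (MvPowerSeries σ ℂ)) (s : Finset ι)
    (c : ι → MvPowerSeries σ ℂ) (G : ι → List ℕ → MvPowerSeries σ ℂ) :
    ZstarTrunc N us (fun w => ∑ i ∈ s, c i * G i w) = ∑ i ∈ s, c i * ZstarTrunc N us (G i) := by
  have : (fun w => ∑ i ∈ s, c i * G i w) = ∑ i ∈ s, c i • G i := by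
    ext w; simp [Finset.sum_apply]
  simp [this, map_sum]

theorem ZstarTrunc_mem {I : Ideal (MvPowerSeries σ ℂ)} (us : List (MvPowerSeries σ ℂ))
    {F : List ℕ → MvPowerSeries σ ℂ} (hF : ∀ w, F w ∈ I) : ZstarTrunc N us F ∈ I := by
  induction us generalizing F with
  | nil => exact hF []
  | cons u us ih =>
    rw [ZstarTrunc_cons]
    exact I.sum_mem fun a _ => I.mul_mem_left _ (ih fun w => hF _)

theorem ZstarTrunc_sub_mem {I : Ideal (MvPowerSeries σ ℂ)} (us : List (MvPowerSeries σ ℂ))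
    {F G : List ℕ → MvPowerSeries σ ℂ} (h : ∀ w, F w - G w ∈ I) :
    ZstarTrunc N us F - ZstarTrunc N us G ∈ I := by
  rw [← map_sub]
  exact ZstarTrunc_mem N us h

theorem ZstarTrunc_ofFn {m : ℕ} (u : Fin m → MvPowerSeries σ ℂ) (F : List ℕ → MvPowerSeries σ ℂ) :
    ZstarTrunc N (List.ofFn u) F = ∑ k ∈ Fintype.piFinset (fun _ : Fin m => range (N + 1)),
      (∏ j, expNegTerm (u j) (k j)) * F (List.ofFn k) := by
  induction m generalizing F with
  | zero => simp
  | succ m ih =>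
    rw [List.ofFn_succ, ZstarTrunc_cons, Fin.sum_piFinset_const_succ]
    refine sum_congr rfl fun a _ => ?_
    rw [ih, mul_sum]
    refine sum_congr rfl fun k _ => ?_
    simp [Fin.prod_univ_succ, List.ofFn_succ, mul_assoc]

end ZstarTrunc

theorem Zstar_sub_ZstarTrunc_mem {n : ℕ} (z : List ℕ → ℂ) {u : List (MvPowerSeries (Fin n) ℂ)}
    (hu : ∀ x ∈ u, constantCoeff x = 0) (N : ℕ) :
    Zstar z u - ZstarTrunc N u (fun w => C (z w)) ∈ orderGtIdeal (Fin n) ℂ N := by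
  refine mem_orderGtIdeal.2 fun d hd => ?_
  have hu' (j : Fin u.length) : constantCoeff (u.get j) = 0 := hu _ (List.get_mem u j)
  have hT := ZstarTrunc_ofFn N u.get (fun w => C (z w))
  rw [List.ofFn_get] at hT
  rw [map_sub, sub_eq_zero, hT, map_sum]
  change ∑ k ∈ Fintype.piFinset fun _ => range (∑ i, d i + 1),
    z (List.ofFn k) * coeff d (∏ j, expNegTerm (u.get j) (k j)) = _
  simp only [coeff_mul_C, mul_comm (coeff d _), ← Finsupp.degree_eq_sum]
  refine sum_subset (Fintype.piFinset_subset _ _ fun _ => range_subset_range.2 (by omega))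
    fun k _ hk => ?_
  obtain ⟨j, hj⟩ : ∃ j, d.degree < k j := by
    simpa [Fintype.mem_piFinset] using hk
  rw [coeff_prod_expNegTerm_eq_zero hu' hj, mul_zero]

section Harmonic

variable {σ : Type*} (N : ℕ)

/-- The quasi-shuffle taken on the exponent words `k, l` instead of on the series `u, v`;
`ZstarTruncQs_sub_mem` compares the two. -/
noncomputable def ZstarTruncQs (F : List ℕ → MvPowerSeries σ ℂ)
    (u v : List (MvPowerSeries σ ℂ)) : MvPowerSeries σ ℂ :=
  ZstarTrunc N u fun k => ZstarTrunc N v fun l => ((qs k l).map F).sum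

theorem ZstarTruncQs_cons_cons (F : List ℕ → MvPowerSeries σ ℂ) (a b : MvPowerSeries σ ℂ)
    (u v : List (MvPowerSeries σ ℂ)) :
    ZstarTruncQs N F (a :: u) (b :: v) =
      ∑ x ∈ range (N + 1), expNegTerm a x * ZstarTruncQs N (fun w => F (x :: w)) u (b :: v) +
      ∑ y ∈ range (N + 1), expNegTerm b y * ZstarTruncQs N (fun w => F (y :: w)) (a :: u) v +
      ∑ x ∈ range (N + 1), ∑ y ∈ range (N + 1), expNegTerm a x * expNegTerm b y *
        ZstarTruncQs N (fun w => F ((x + y) :: w)) u v := by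
  simp only [ZstarTruncQs, ZstarTrunc_cons, qs_cons_cons, Multiset.map_add, Multiset.map_map,
    Multiset.sum_add, Function.comp_def, ZstarTrunc_add, mul_add, sum_add_distrib,
    ZstarTrunc_sum_mul, mul_sum, add_assoc]
  refine congrArg₂ (· + ·) (sum_comm.trans ?_) (congrArg₂ (· + ·) rfl (sum_comm.trans ?_)) <;>
    simp only [mul_left_comm (expNegTerm b _), mul_assoc]

theorem sum_map_ZstarTrunc_cons (a : MvPowerSeries σ ℂ) (s : Multiset (List (MvPowerSeries σ ℂ)))
    (F : List ℕ → MvPowerSeries σ ℂ) :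
    (s.map fun α => ZstarTrunc N (a :: α) F).sum =
      ∑ x ∈ range (N + 1),
        expNegTerm a x * (s.map fun α => ZstarTrunc N α fun w => F (x :: w)).sum := by
  simp only [ZstarTrunc_cons, ← Multiset.sum_map_mul_left]
  exact Multiset.sum_map_sum_map s (range (N + 1)).val

theorem ZstarTruncQs_sub_mem (F : List ℕ → MvPowerSeries σ ℂ) {u v : List (MvPowerSeries σ ℂ)}
    (hu : ∀ x ∈ u, constantCoeff x = 0) (hv : ∀ x ∈ v, constantCoeff x = 0) :
    ZstarTruncQs N F u v - ((qs u v).map fun α => ZstarTrunc N α F).sum ∈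
      orderGtIdeal σ ℂ N := by
  induction u generalizing v F with
  | nil => simp [ZstarTruncQs]
  | cons a u ihu =>
    induction v generalizing F with
    | nil => simp [ZstarTruncQs]
    | cons b v ihv =>
      simp only [List.mem_cons, forall_eq_or_imp] at hu hv
      set I := orderGtIdeal σ ℂ N
      set K := fun n => ((qs u v).map fun α => ZstarTrunc N α fun w => F (n :: w)).sum
      have h₁ := I.sum_mem fun x (_ : x ∈ range (N + 1)) =>
        I.mul_mem_left (expNegTerm a x) (ihu (fun w => F (x :: w)) (v := b :: v) hu.2
          (by simpa using hv))
      have h₂ := I.sum_mem fun y (_ : y ∈ range (N + 1)) =>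
        I.mul_mem_left (expNegTerm b y) (ihv (fun w => F (y :: w)) hv.2)
      have h₃ := I.sum_mem fun x (_ : x ∈ range (N + 1)) =>
        I.sum_mem fun y (_ : y ∈ range (N + 1)) =>
          I.mul_mem_left (expNegTerm a x * expNegTerm b y)
            (ihu (fun w => F ((x + y) :: w)) hu.2 hv.2)
      have h₄ := sum_sum_expNegTerm_mul_sub_mem hu.1 hv.1 N K
      rw [ZstarTruncQs_cons_cons, qs_cons_cons]
      simp only [Multiset.map_add, Multiset.map_map, Function.comp_def, Multiset.sum_add,
        sum_map_ZstarTrunc_cons]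
      convert I.add_mem (I.add_mem (I.add_mem h₁ h₂) h₃) h₄ using 1
      simp only [mul_sub, sum_sub_distrib, K]
      abel

end Harmonic

section Zstar

variable {n : ℕ}

theorem Zstar_singleton_congr {f g : List ℕ → ℂ} (h : ∀ k, f [k] = g [k])
    (u : MvPowerSeries (Fin n) ℂ) : Zstar f [u] = Zstar g [u] :=
  funext fun _ => sum_congr rfl fun _ _ => by simp [List.ofFn_succ, h]

theorem Zstar_mul_Zstar {z : List ℕ → ℂ}
    (hz : ∀ w w' : List ℕ, z w * z w' = ((qs w w').map z).sum)
    {u v : List (MvPowerSeries (Fin n) ℂ)} (hu : ∀ x ∈ u, constantCoeff x = 0)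
    (hv : ∀ x ∈ v, constantCoeff x = 0) :
    Zstar z u * Zstar z v = ((qs u v).map (Zstar z)).sum := by
  refine eq_of_forall_sub_mem_orderGtIdeal fun N => ?_
  set I := orderGtIdeal (Fin n) ℂ N
  set T := fun w => ZstarTrunc N w (fun k => C (z k))
  have hprod : T u * T v = ZstarTruncQs N (fun k => C (z k)) u v := by
    simp only [T, ZstarTruncQs, mul_comm (ZstarTrunc N u _), ZstarTrunc_mul_left]
    congr 1; funext k
    rw [mul_comm, ZstarTrunc_mul_left]
    congr 1; funext l
    rw [← map_mul, hz, map_multiset_sum, Multiset.map_map]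
    rfl
  have hqs : ((qs u v).map (Zstar z)).sum - ((qs u v).map T).sum ∈ I := by
    rw [← Multiset.sum_map_sub]
    refine I.multiset_sum_mem _ fun x hx => ?_
    obtain ⟨α, hα, rfl⟩ := Multiset.mem_map.1 hx
    refine Zstar_sub_ZstarTrunc_mem z (fun x hx => ?_) N
    simpa using mem_of_mem_qs (S := AddMonoidHom.mker (constantCoeff (σ := Fin n) (R := ℂ)))
      hu hv hα x hx
  have key : Zstar z u * Zstar z v - ((qs u v).map (Zstar z)).sum =
      (Zstar z u - T u) * Zstar z v + T u * (Zstar z v - T v) +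
        (ZstarTruncQs N (fun k => C (z k)) u v - ((qs u v).map T).sum) -
        (((qs u v).map (Zstar z)).sum - ((qs u v).map T).sum) := by
    rw [← hprod]; ring
  rw [key]
  exact I.sub_mem (I.add_mem (I.add_mem
    (I.mul_mem_right _ (Zstar_sub_ZstarTrunc_mem z hu N))
    (I.mul_mem_left _ (Zstar_sub_ZstarTrunc_mem z hv N)))
    (ZstarTruncQs_sub_mem N _ hu hv)) hqs

theorem Zstar_singleton_mul_mul {z : List ℕ → ℂ}
    (hz : ∀ w w' : List ℕ, z w * z w' = ((qs w w').map z).sum)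
    {a b c : MvPowerSeries (Fin n) ℂ} (ha : constantCoeff a = 0) (hb : constantCoeff b = 0)
    (hc : constantCoeff c = 0) :
    Zstar z [c] * (Zstar z [b] * Zstar z [a]) =
      Zstar z [a, b, c] + Zstar z [a, c, b] + Zstar z [b, a, c] + Zstar z [b, c, a] +
        Zstar z [c, a, b] + Zstar z [c, b, a] + Zstar z [c + a, b] + Zstar z [b, c + a] +
        Zstar z [c + b, a] + Zstar z [a, c + b] + Zstar z [b + a, c] + Zstar z [c, b + a] +
        Zstar z [c + (b + a)] := by
  rw [Zstar_mul_Zstar hz (by simpa using hb) (by simpa using ha)]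
  simp only [qs_cons_cons, qs_nil_left, qs_nil_right, Multiset.map_add, Multiset.map_singleton,
    Multiset.sum_add, Multiset.sum_singleton, mul_add]
  rw [Zstar_mul_Zstar hz (by simpa using hc) (by simp [ha, hb]),
    Zstar_mul_Zstar hz (by simpa using hc) (by simp [ha, hb]),
    Zstar_mul_Zstar hz (by simpa using hc) (by simp [ha, hb])]
  simp only [qs_cons_cons, qs_nil_left, qs_nil_right, Multiset.map_add, Multiset.map_singleton,
    Multiset.sum_add, Multiset.sum_singleton]
  abel

end Zstar

theorem ZEMS_eq_Zstar (zE : List ℕ → ℂ) (r : ℕ) :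
    ZEMS zE r = Zstar zE (List.ofFn fun i : Fin r => X i) := by
  refine eq_of_forall_sub_mem_orderGtIdeal fun N => ?_
  have hX : ∀ x ∈ List.ofFn fun i : Fin r => (X i : MvPowerSeries (Fin r) ℂ),
      constantCoeff x = 0 := by
    simp [List.mem_ofFn]
  rw [← sub_sub_sub_cancel_right _ _ (ZstarTrunc N _ fun w => C (zE w))]
  refine sub_mem ?_ (Zstar_sub_ZstarTrunc_mem zE hX N)
  refine mem_orderGtIdeal.2 fun d hd => ?_
  rw [map_sub, sub_eq_zero, ZstarTrunc_ofFn, map_sum]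
  simp only [prod_expNegTerm_X, coeff_mul_C, coeff_monomial]
  rw [sum_eq_single_of_mem (⇑d) ?_ ?_]
  · rw [if_pos (by ext; simp)]
    exact mul_comm _ _
  · simpa [Fintype.mem_piFinset, Nat.lt_succ_iff] using
      fun i => (Finsupp.le_degree i d).trans hd
  · intro k _ hk
    rw [if_neg fun h => hk (by simp [h]), zero_mul]

section EMS

variable {n : ℕ} {zE : List ℕ → ℂ}
  (hErec : ∀ (w : List ℕ) (a b : ℕ), zE (w ++ [a, b]) =
    ∑ p ∈ antidiagonal b, (b.choose p.1 : ℂ) * zE [p.1] * zE (w ++ [a + p.2]))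
include hErec

theorem ZstarTrunc_pair_sub_mem {u v : MvPowerSeries (Fin n) ℂ} (hu : constantCoeff u = 0)
    (hv : constantCoeff v = 0) (N : ℕ) (w : List ℕ) :
    ZstarTrunc N [u, v] (fun w' => C (zE (w ++ w'))) -
      ZstarTrunc N [v] (fun w' => C (zE w')) * ZstarTrunc N [u + v] (fun w' => C (zE (w ++ w')))
      ∈ orderGtIdeal (Fin n) ℂ N := by
  set I := orderGtIdeal (Fin n) ℂ N
  set K := fun m => C (zE (w ++ [m]))
  set H := fun a i j =>
    expNegTerm u a * (expNegTerm v i * expNegTerm v j) * (C (zE [i]) * K (a + j))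
  have expand : ZstarTrunc N [u, v] (fun w' => C (zE (w ++ w'))) =
      ∑ a ∈ range (N + 1), ∑ b ∈ range (N + 1), ∑ p ∈ antidiagonal b, H a p.1 p.2 := by
    simp only [ZstarTrunc_cons, ZstarTrunc_nil, hErec, map_sum, mul_sum]
    refine sum_congr rfl fun a _ => sum_congr rfl fun b _ => sum_congr rfl fun p hp => ?_
    rw [← HasAntidiagonal.mem_antidiagonal.1 hp]
    simp only [H, K, map_mul, map_natCast, expNegTerm_mul_expNegTerm]
    rw [Nat.cast_smul_eq_nsmul, nsmul_eq_mul]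
    ring
  have collapse : ∑ a ∈ range (N + 1), ∑ b ∈ range (N + 1), ∑ p ∈ antidiagonal b, H a p.1 p.2 -
      ∑ a ∈ range (N + 1), ∑ i ∈ range (N + 1), ∑ j ∈ range (N + 1), H a i j ∈ I := by
    rw [← sum_sub_distrib]
    refine I.sum_mem fun a _ => ?_
    rw [← neg_sub]
    exact I.neg_mem <| sum_range_sum_range_sub_sum_antidiagonal_mem I.toAddSubgroup N (H a)
      fun i j h => I.mul_mem_right _ (I.mul_mem_left _ (expNegTerm_mul_mem_orderGtIdeal hv hv h))
  have factor : ∑ a ∈ range (N + 1), ∑ i ∈ range (N + 1), ∑ j ∈ range (N + 1), H a i j =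
      ZstarTrunc N [v] (fun w' => C (zE w')) *
        ∑ a ∈ range (N + 1), ∑ j ∈ range (N + 1), expNegTerm u a * expNegTerm v j * K (a + j) := by
    simp only [H, ZstarTrunc_cons, ZstarTrunc_nil, sum_mul, mul_sum]
    refine sum_congr rfl fun a _ => sum_comm.trans <| sum_congr rfl fun j _ => sum_congr rfl
      fun i _ => by ring
  have merge := sum_sum_expNegTerm_mul_sub_mem hu hv N K
  have sum_uv : ZstarTrunc N [u + v] (fun w' => C (zE (w ++ w'))) =
      ∑ m ∈ range (N + 1), expNegTerm (u + v) m * K m := by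
    simp [K]
  rw [expand, sum_uv]
  convert I.add_mem collapse (I.mul_mem_left (ZstarTrunc N [v] fun w' => C (zE w')) merge) using 1
  rw [factor]
  ring

theorem Zstar_append_pair {us : List (MvPowerSeries (Fin n) ℂ)} {u v : MvPowerSeries (Fin n) ℂ}
    (hus : ∀ x ∈ us, constantCoeff x = 0) (hu : constantCoeff u = 0) (hv : constantCoeff v = 0) :
    Zstar zE (us ++ [u, v]) = Zstar zE [v] * Zstar zE (us ++ [u + v]) := by
  refine eq_of_forall_sub_mem_orderGtIdeal fun N => ?_
  set I := orderGtIdeal (Fin n) ℂ N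
  set T : List (MvPowerSeries (Fin n) ℂ) → MvPowerSeries (Fin n) ℂ :=
    fun w => ZstarTrunc N w fun k => C (zE k)
  have h₁ := Zstar_sub_ZstarTrunc_mem zE (u := us ++ [u, v])
    (by simpa [or_imp, forall_and] using ⟨hus, hu, hv⟩) N
  have h₂ := Zstar_sub_ZstarTrunc_mem zE (u := [v]) (by simpa using hv) N
  have h₃ := Zstar_sub_ZstarTrunc_mem zE (u := us ++ [u + v])
    (by simpa [or_imp, forall_and, hu, hv] using hus) N
  have h₄ : T (us ++ [u, v]) - T [v] * T (us ++ [u + v]) ∈ I := by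
    simp only [T, ZstarTrunc_append]
    rw [ZstarTrunc_mul_left]
    exact ZstarTrunc_sub_mem N us fun w => ZstarTrunc_pair_sub_mem hErec hu hv N w
  have key : Zstar zE (us ++ [u, v]) - Zstar zE [v] * Zstar zE (us ++ [u + v]) =
      (Zstar zE (us ++ [u, v]) - T (us ++ [u, v])) +
        (T (us ++ [u, v]) - T [v] * T (us ++ [u + v])) -
        (Zstar zE [v] - T [v]) * Zstar zE (us ++ [u + v]) -
        T [v] * (Zstar zE (us ++ [u + v]) - T (us ++ [u + v])) := by
    ring
  rw [key]
  exact I.sub_mem (I.sub_mem (I.add_mem h₁ h₄) (I.mul_mem_right _ h₂)) (I.mul_mem_left _ h₃)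

theorem ZEMS_three_eq_mul :
    ZEMS zE 3 = Zstar zE [X 2] * (Zstar zE [X 1 + X 2] * Zstar zE [X 0 + X 1 + X 2]) := by
  have hX (i : Fin 3) : constantCoeff (X i : MvPowerSeries (Fin 3) ℂ) = 0 := constantCoeff_X i
  calc ZEMS zE 3
    _ = Zstar zE ([X 0] ++ [X 1, X 2]) := by simp [ZEMS_eq_Zstar, List.ofFn_succ]
    _ = Zstar zE [X 2] * Zstar zE ([X 0] ++ [X 1 + X 2]) :=
      Zstar_append_pair hErec (by simp [hX]) (hX 1) (hX 2)
    _ = Zstar zE [X 2] * (Zstar zE [X 1 + X 2] * Zstar zE ([] ++ [X 0 + (X 1 + X 2)])) := by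
      rw [List.singleton_append, ← List.nil_append [X 0, X 1 + X 2],
        Zstar_append_pair hErec (by simp) (hX 0) (by simp)]
    _ = _ := by rw [List.nil_append, add_assoc]

end EMS

theorem ZEMS_three_general (z : List ℕ → ℂ)
    (hz : ∀ w w' : List ℕ, z w * z w' = ((qs w w').map z).sum)
    (hzzeta : ∀ k : ℕ, z [k] = riemannZeta (-(k : ℂ)))
    (zE : List ℕ → ℂ)
    (hE1 : ∀ k : ℕ, zE [k] = riemannZeta (-(k : ℂ)))
    (hErec : ∀ (w : List ℕ) (a b : ℕ),
      zE (w ++ [a, b]) =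
        ∑ p ∈ Finset.HasAntidiagonal.antidiagonal b, (b.choose p.1 : ℂ) * zE [p.1] * zE (w ++ [a + p.2])) :
    ZEMS zE 3 =
      Zstar z [MvPowerSeries.X 0 + MvPowerSeries.X 1 + MvPowerSeries.X 2,
          MvPowerSeries.X 1 + MvPowerSeries.X 2, MvPowerSeries.X 2] +
        Zstar z [MvPowerSeries.X 0 + MvPowerSeries.X 1 + MvPowerSeries.X 2,
          MvPowerSeries.X 2, MvPowerSeries.X 1 + MvPowerSeries.X 2] +
        Zstar z [MvPowerSeries.X 1 + MvPowerSeries.X 2,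
          MvPowerSeries.X 0 + MvPowerSeries.X 1 + MvPowerSeries.X 2, MvPowerSeries.X 2] +
        Zstar z [MvPowerSeries.X 1 + MvPowerSeries.X 2, MvPowerSeries.X 2,
          MvPowerSeries.X 0 + MvPowerSeries.X 1 + MvPowerSeries.X 2] +
        Zstar z [MvPowerSeries.X 2,
          MvPowerSeries.X 0 + MvPowerSeries.X 1 + MvPowerSeries.X 2,
          MvPowerSeries.X 1 + MvPowerSeries.X 2] +
        Zstar z [MvPowerSeries.X 2, MvPowerSeries.X 1 + MvPowerSeries.X 2,
          MvPowerSeries.X 0 + MvPowerSeries.X 1 + MvPowerSeries.X 2] +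
        Zstar z [MvPowerSeries.X 0 + MvPowerSeries.X 1 + 2 * MvPowerSeries.X 2,
          MvPowerSeries.X 1 + MvPowerSeries.X 2] +
        Zstar z [MvPowerSeries.X 1 + MvPowerSeries.X 2,
          MvPowerSeries.X 0 + MvPowerSeries.X 1 + 2 * MvPowerSeries.X 2] +
        Zstar z [MvPowerSeries.X 1 + 2 * MvPowerSeries.X 2,
          MvPowerSeries.X 0 + MvPowerSeries.X 1 + MvPowerSeries.X 2] +
        Zstar z [MvPowerSeries.X 0 + MvPowerSeries.X 1 + MvPowerSeries.X 2,
          MvPowerSeries.X 1 + 2 * MvPowerSeries.X 2] +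
        Zstar z [MvPowerSeries.X 0 + 2 * MvPowerSeries.X 1 + 2 * MvPowerSeries.X 2,
          MvPowerSeries.X 2] +
        Zstar z [MvPowerSeries.X 2,
          MvPowerSeries.X 0 + 2 * MvPowerSeries.X 1 + 2 * MvPowerSeries.X 2] +
        Zstar z [MvPowerSeries.X 0 + 2 * MvPowerSeries.X 1 + 3 * MvPowerSeries.X 2] := by
  have hzE (k : ℕ) : zE [k] = z [k] := by rw [hE1, hzzeta]
  rw [ZEMS_three_eq_mul hErec, Zstar_singleton_congr hzE, Zstar_singleton_congr hzE,
    Zstar_singleton_congr hzE, Zstar_singleton_mul_mul hz (by simp) (by simp) (by simp)]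
  have e₁ : (X 2 + (X 1 + X 2 + (X 0 + X 1 + X 2)) : MvPowerSeries (Fin 3) ℂ) =
      X 0 + 2 * X 1 + 3 * X 2 := by ring
  have e₂ : (X 1 + X 2 + (X 0 + X 1 + X 2) : MvPowerSeries (Fin 3) ℂ) =
      X 0 + 2 * X 1 + 2 * X 2 := by ring
  have e₃ : (X 2 + (X 0 + X 1 + X 2) : MvPowerSeries (Fin 3) ℂ) = X 0 + X 1 + 2 * X 2 := by ring
  have e₄ : (X 2 + (X 1 + X 2) : MvPowerSeries (Fin 3) ℂ) = X 1 + 2 * X 2 := by ring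
  rw [e₁, e₂, e₃, e₄]

/-- Depth three instance of the main theorem, expressing `Z_EMS(t₁,t₂,t₃)` as the sum of
thirteen `Z_*`-terms indexed by the surjections in `𝒫(3,3) ∪ 𝒫(3,2) ∪ 𝒫(3,1)`. -/
theorem ZEMS_three (z : List ℕ → ℂ) (hz1 : z [] = 1)
    (hz : ∀ w w' : List ℕ, z w * z w' = ((qs w w').map z).sum)
    (hzzeta : ∀ k : ℕ, z [k] = riemannZeta (-(k : ℂ)))
    (zE : List ℕ → ℂ)
    (hE1 : ∀ k : ℕ, zE [k] = riemannZeta (-(k : ℂ)))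
    (hErec : ∀ (w : List ℕ) (a b : ℕ),
      zE (w ++ [a, b]) =
        ∑ p ∈ Finset.HasAntidiagonal.antidiagonal b, (b.choose p.1 : ℂ) * zE [p.1] * zE (w ++ [a + p.2])) :
    ZEMS zE 3 =
      Zstar z [MvPowerSeries.X 0 + MvPowerSeries.X 1 + MvPowerSeries.X 2,
          MvPowerSeries.X 1 + MvPowerSeries.X 2, MvPowerSeries.X 2] +
        Zstar z [MvPowerSeries.X 0 + MvPowerSeries.X 1 + MvPowerSeries.X 2,
          MvPowerSeries.X 2, MvPowerSeries.X 1 + MvPowerSeries.X 2] +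
        Zstar z [MvPowerSeries.X 1 + MvPowerSeries.X 2,
          MvPowerSeries.X 0 + MvPowerSeries.X 1 + MvPowerSeries.X 2, MvPowerSeries.X 2] +
        Zstar z [MvPowerSeries.X 1 + MvPowerSeries.X 2, MvPowerSeries.X 2,
          MvPowerSeries.X 0 + MvPowerSeries.X 1 + MvPowerSeries.X 2] +
        Zstar z [MvPowerSeries.X 2,
          MvPowerSeries.X 0 + MvPowerSeries.X 1 + MvPowerSeries.X 2,
          MvPowerSeries.X 1 + MvPowerSeries.X 2] +
        Zstar z [MvPowerSeries.X 2, MvPowerSeries.X 1 + MvPowerSeries.X 2,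
          MvPowerSeries.X 0 + MvPowerSeries.X 1 + MvPowerSeries.X 2] +
        Zstar z [MvPowerSeries.X 0 + MvPowerSeries.X 1 + 2 * MvPowerSeries.X 2,
          MvPowerSeries.X 1 + MvPowerSeries.X 2] +
        Zstar z [MvPowerSeries.X 1 + MvPowerSeries.X 2,
          MvPowerSeries.X 0 + MvPowerSeries.X 1 + 2 * MvPowerSeries.X 2] +
        Zstar z [MvPowerSeries.X 1 + 2 * MvPowerSeries.X 2,
          MvPowerSeries.X 0 + MvPowerSeries.X 1 + MvPowerSeries.X 2] +
        Zstar z [MvPowerSeries.X 0 + MvPowerSeries.X 1 + MvPowerSeries.X 2,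
          MvPowerSeries.X 1 + 2 * MvPowerSeries.X 2] +
        Zstar z [MvPowerSeries.X 0 + 2 * MvPowerSeries.X 1 + 2 * MvPowerSeries.X 2,
          MvPowerSeries.X 2] +
        Zstar z [MvPowerSeries.X 2,
          MvPowerSeries.X 0 + 2 * MvPowerSeries.X 1 + 2 * MvPowerSeries.X 2] +
        Zstar z [MvPowerSeries.X 0 + 2 * MvPowerSeries.X 1 + 3 * MvPowerSeries.X 2] :=
  ZEMS_three_general z hz hzzeta zE hE1 hErec
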